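/- Let 𝓕 ⊂ ℤ³∖{0} be a family of vectors of finite cardinality and let d > 0. Then there exists η = η(𝓕,d) > 0 with the following property: for any two families of closed geodesics {s_f}_{f∈𝓕} = {l_{f,p_f}}_{f∈𝓕} and {s̃_f}_{f∈𝓕} = {l_{f,q_f}}_{f∈𝓕} satisfying dist(s_f, s_g) ≥ 2d and dist(s̃_f, s̃_g) ≥ 2d for all f ≠ g in 𝓕, one can find z ∈ ℝ³ with |z| ≤ d/4 such that the shifted geodesics s̄_f := l_{f, q_f + z} satisfy min{dist(s_f, s̄_g) : f, g ∈ 𝓕} ≥ η. -/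

import Mathlib

open Real

noncomputable section

abbrev V3 : Type := Fin 3 → ℝ

def enorm3 (x : V3) : ℝ := Real.sqrt (∑ i, (x i)^2)

def geo (f : Fin 3 → ℤ) (p : V3) : Set V3 :=
  {y | ∃ (σ : ℝ) (m : Fin 3 → ℤ), y = (σ • fun i => (f i : ℝ)) + p + fun i => 2 * π * (m i : ℝ)}

/-!
For each pair `f, g` pick a nonzero integer vector `n ⊥ f, g`. Along `l_{f,p}` and `l_{g,q}` the
function `n · x` is constant modulo `2π`, so `|x - y| ≥ dist(n · (p - q), 2πℤ) / |n|` for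
`x ∈ l_{f,p}`, `y ∈ l_{g,q}`. Shift `q` by `z = t e`, where `e` is a fixed direction with
`n · e ≠ 0` for all pairs. For each pair, the parameters `t ∈ [0, T]` that bring
`n · (p - q - t e)` within `ε` of `2πℤ` have measure `O(ε)`, with a constant independent of
`p` and `q`; for small `ε` some `t` avoids all of them.
-/

open Matrix MeasureTheory Set

theorem exists_ne_zero_dotProduct_eq_zero_pair {R : Type*} [CommRing R] [IsDomain R]
    (f g : Fin 3 → R) : ∃ n ≠ 0, n ⬝ᵥ f = 0 ∧ n ⬝ᵥ g = 0 := by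
  obtain ⟨n, hn, hM⟩ := (exists_mulVec_eq_zero_iff (M := Matrix.of ![f, g, 0])).2
    (det_eq_zero_of_row_eq_zero 2 fun _ => rfl)
  exact ⟨n, hn, by simpa [dotProduct_comm] using congrFun hM 0,
    by simpa [dotProduct_comm] using congrFun hM 1⟩

theorem exists_dotProduct_ne_zero {ι K n : Type*} [Field K] [Infinite K] [Fintype n]
    [DecidableEq n] (s : Finset ι) (v : ι → n → K) (hv : ∀ i ∈ s, v i ≠ 0) :
    ∃ e, ∀ i ∈ s, v i ⬝ᵥ e ≠ 0 := by
  obtain ⟨e, he⟩ := Module.Dual.exists_forall_ne_zero_of_forall_exists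
    (fun i : s => dotProductEquiv K n (v i)) fun i =>
      have ⟨j, hj⟩ := Function.ne_iff.1 (hv i i.2)
      ⟨Pi.single j 1, by simpa using hj⟩
  exact ⟨e, fun i hi => he ⟨i, hi⟩⟩

theorem enorm3_eq_norm (x : V3) : enorm3 x = ‖WithLp.toLp 2 x‖ := by
  simp [enorm3, EuclideanSpace.norm_eq]

theorem abs_dotProduct_le_enorm3_mul (u v : V3) : |u ⬝ᵥ v| ≤ enorm3 u * enorm3 v := by
  simpa [enorm3_eq_norm, EuclideanSpace.inner_toLp_toLp, dotProduct_comm] using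
    abs_real_inner_le_norm (WithLp.toLp 2 u) (WithLp.toLp 2 v)

theorem enorm3_smul (t : ℝ) (x : V3) : enorm3 (t • x) = |t| * enorm3 x := by
  rw [enorm3_eq_norm, enorm3_eq_norm, WithLp.toLp_smul, norm_smul, Real.norm_eq_abs]

theorem enorm3_pos {x : V3} (hx : x ≠ 0) : 0 < enorm3 x := by
  rw [enorm3_eq_norm]; simpa using hx

theorem enorm3_nonneg (x : V3) : 0 ≤ enorm3 x := Real.sqrt_nonneg _

theorem exists_dotProduct_eq_of_mem_geo {n f : Fin 3 → ℤ} (hn : n ⬝ᵥ f = 0) {p x : V3}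
    (hx : x ∈ geo f p) : ∃ k : ℤ, (Int.cast ∘ n) ⬝ᵥ x = (Int.cast ∘ n) ⬝ᵥ p + 2 * π * k := by
  obtain ⟨σ, m, rfl⟩ := hx
  have hn' : ((n ⬝ᵥ f : ℤ) : ℝ) = 0 := by simp [hn]
  refine ⟨n ⬝ᵥ m, ?_⟩
  simp only [dotProduct, Fin.sum_univ_three, Function.comp_apply, Pi.add_apply, Pi.smul_apply,
    smul_eq_mul] at hn' ⊢
  push_cast at hn' ⊢
  linear_combination σ * hn'

theorem le_enorm3_mul_enorm3_sub_of_mem_geo {n f g : Fin 3 → ℤ} (hf : n ⬝ᵥ f = 0)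
    (hg : n ⬝ᵥ g = 0) {p q x y : V3} (hx : x ∈ geo f p) (hy : y ∈ geo g q) {ε : ℝ}
    (hε : ∀ k : ℤ, ε ≤ |(Int.cast ∘ n) ⬝ᵥ (p - q) - 2 * π * k|) :
    ε ≤ enorm3 (Int.cast ∘ n) * enorm3 (x - y) := by
  obtain ⟨k, hk⟩ := exists_dotProduct_eq_of_mem_geo hf hx
  obtain ⟨l, hl⟩ := exists_dotProduct_eq_of_mem_geo hg hy
  calc ε ≤ |(Int.cast ∘ n) ⬝ᵥ (p - q) - 2 * π * ↑(l - k)| := hε _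
    _ = |(Int.cast ∘ n) ⬝ᵥ (x - y)| := by
      rw [dotProduct_sub, dotProduct_sub, hk, hl]; push_cast; ring_nf
    _ ≤ _ := abs_dotProduct_le_enorm3_mul _ _

theorem card_Icc_ceil_floor_le {u v : ℝ} (h : u ≤ v) :
    ((Finset.Icc ⌈u⌉ ⌊v⌋).card : ℝ) ≤ v - u + 1 := by
  have hle : ⌈u⌉ ≤ ⌊v⌋ + 1 := (Int.ceil_mono h).trans (Int.ceil_le_floor_add_one v)
  have hcard : ((Finset.Icc ⌈u⌉ ⌊v⌋).card : ℤ) = ⌊v⌋ + 1 - ⌈u⌉ := by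
    rw [Int.card_Icc, Int.toNat_of_nonneg (by omega)]
  have hcard' : ((Finset.Icc ⌈u⌉ ⌊v⌋).card : ℝ) = ⌊v⌋ + 1 - ⌈u⌉ := by exact_mod_cast hcard
  linarith [Int.floor_le v, Int.le_ceil u]

theorem volume_near_two_pi_int_le {a : ℝ} (ha : a ≠ 0) (c : ℝ) {T ε : ℝ} (hT : 0 ≤ T)
    (hε₀ : 0 ≤ ε) (hε₁ : ε ≤ 1) :
    volume {t ∈ Icc 0 T | ∃ k : ℤ, |c - a * t - 2 * π * k| < ε}
      ≤ ENNReal.ofReal ((T + 4 / |a|) * ε) := by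
  have ha' : 0 < |a| := abs_pos.2 ha
  have hπ : 1 ≤ π := by linarith [pi_gt_three]
  set m := c - a * T / 2 with hm
  set R := |a| * T / 2 + ε with hR
  set K := Finset.Icc ⌈(m - R) / (2 * π)⌉ ⌊(m + R) / (2 * π)⌋
  have hcover : {t ∈ Icc 0 T | ∃ k : ℤ, |c - a * t - 2 * π * k| < ε}
      ⊆ ⋃ k ∈ K, Metric.ball ((c - 2 * π * k) / a) (ε / |a|) := by
    rintro t ⟨⟨ht0, htT⟩, k, hk⟩
    have hmid : |a * t - a * T / 2| ≤ |a| * T / 2 := by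
      rw [show a * t - a * T / 2 = a * (t - T / 2) by ring, abs_mul, mul_div_assoc]
      gcongr
      exact abs_le.2 ⟨by linarith, by linarith⟩
    have hkm : |2 * π * k - m| < R := by
      calc |2 * π * k - m| = |-(c - a * t - 2 * π * k) - (a * t - a * T / 2)| := by
            rw [hm]; ring_nf
        _ ≤ |-(c - a * t - 2 * π * k)| + |a * t - a * T / 2| := abs_sub _ _
        _ < R := by rw [abs_neg]; linarith
    obtain ⟨hlo, hhi⟩ := abs_lt.1 hkm
    refine mem_biUnion (x := k) (Finset.mem_Icc.2 ⟨Int.ceil_le.2 ?_, Int.le_floor.2 ?_⟩) ?_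
    · rw [div_le_iff₀ (by positivity)]; linarith
    · rw [le_div_iff₀ (by positivity)]; linarith
    · rw [Metric.mem_ball, Real.dist_eq,
        show t - (c - 2 * π * k) / a = -(c - a * t - 2 * π * k) / a by field_simp; ring,
        abs_div, abs_neg]
      gcongr
  have hcard : (K.card : ℝ) ≤ |a| * T / 2 + 2 := by
    calc (K.card : ℝ) ≤ (m + R) / (2 * π) - (m - R) / (2 * π) + 1 :=
          card_Icc_ceil_floor_le (by gcongr; linarith [show 0 ≤ R by positivity])
      _ = R / π + 1 := by field_simp; ring
      _ ≤ R + 1 := by gcongr; exact div_le_self (by positivity) hπ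
      _ ≤ |a| * T / 2 + 2 := by linarith
  calc volume {t ∈ Icc 0 T | ∃ k : ℤ, |c - a * t - 2 * π * k| < ε}
      ≤ volume (⋃ k ∈ K, Metric.ball ((c - 2 * π * k) / a) (ε / |a|)) := measure_mono hcover
    _ ≤ ∑ k ∈ K, volume (Metric.ball ((c - 2 * π * k) / a) (ε / |a|)) :=
      measure_biUnion_finset_le _ _
    _ = ENNReal.ofReal (K.card * (2 * (ε / |a|))) := by
      simp [Real.volume_ball, ENNReal.ofReal_mul]
    _ ≤ ENNReal.ofReal ((T + 4 / |a|) * ε) := by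
      refine ENNReal.ofReal_le_ofReal ?_
      calc (K.card : ℝ) * (2 * (ε / |a|)) ≤ (|a| * T / 2 + 2) * (2 * (ε / |a|)) := by gcongr
        _ = (T + 4 / |a|) * ε := by field_simp; ring

theorem exists_uniform_far_from_two_pi_int {ι : Type*} (s : Finset ι) {a : ι → ℝ}
    (ha : ∀ i ∈ s, a i ≠ 0) {T : ℝ} (hT : 0 < T) :
    ∃ ε > 0, ∀ c : ι → ℝ, ∃ t ∈ Icc 0 T, ∀ i ∈ s, ∀ k : ℤ, ε ≤ |c i - a i * t - 2 * π * k| := by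
  set S := ∑ i ∈ s, (T + 4 / |a i|)
  have hS : 0 ≤ S := Finset.sum_nonneg fun i _ => by positivity
  set ε := min 1 (T / (2 * (1 + S)))
  have hε : 0 < ε := by positivity
  have hSε : S * ε ≤ T / 2 := by
    calc S * ε ≤ S * (T / (2 * (1 + S))) := by gcongr; exact min_le_right _ _
      _ ≤ (1 + S) * (T / (2 * (1 + S))) := by gcongr; linarith
      _ = T / 2 := by field_simp
  refine ⟨ε, hε, fun c => ?_⟩
  by_contra! hbad
  have hcover : Icc 0 T ⊆
      ⋃ i ∈ s, {t ∈ Icc 0 T | ∃ k : ℤ, |c i - a i * t - 2 * π * k| < ε} := by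
    intro t ht
    obtain ⟨i, hi, k, hk⟩ := hbad t ht
    exact mem_biUnion hi ⟨ht, k, hk⟩
  have hvol : ENNReal.ofReal T ≤ ENNReal.ofReal (S * ε) := by
    calc ENNReal.ofReal T = volume (Icc 0 T) := by rw [Real.volume_Icc, sub_zero]
      _ ≤ ∑ i ∈ s, volume {t ∈ Icc 0 T | ∃ k : ℤ, |c i - a i * t - 2 * π * k| < ε} :=
        (measure_mono hcover).trans (measure_biUnion_finset_le _ _)
      _ ≤ ∑ i ∈ s, ENNReal.ofReal ((T + 4 / |a i|) * ε) :=
        Finset.sum_le_sum fun i hi => volume_near_two_pi_int_le (ha i hi) (c i) hT.le hε.le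
          (min_le_left _ _)
      _ = ENNReal.ofReal (S * ε) := by
        rw [Finset.sum_mul, ENNReal.ofReal_sum_of_nonneg fun i _ => by positivity]
  linarith [(ENNReal.ofReal_le_ofReal_iff (by positivity)).1 hvol]

theorem exists_small_shift_far_from_two_pi_int {ι : Type*} (s : Finset ι) {v : ι → V3}
    (hv : ∀ i ∈ s, v i ≠ 0) {r : ℝ} (hr : 0 < r) :
    ∃ ε > 0, ∀ c : ι → ℝ, ∃ z : V3, enorm3 z ≤ r ∧
      ∀ i ∈ s, ∀ k : ℤ, ε ≤ |c i - v i ⬝ᵥ z - 2 * π * k| := by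
  obtain ⟨e, he⟩ := exists_dotProduct_ne_zero s v hv
  have he₀ := enorm3_nonneg e
  obtain ⟨ε, hε, hfar⟩ := exists_uniform_far_from_two_pi_int s he
    (T := r / (1 + enorm3 e)) (by positivity)
  refine ⟨ε, hε, fun c => ?_⟩
  obtain ⟨t, ⟨ht₀, htT⟩, ht⟩ := hfar c
  refine ⟨t • e, ?_, fun i hi k => ?_⟩
  · calc enorm3 (t • e) = t * enorm3 e := by rw [enorm3_smul, abs_of_nonneg ht₀]
      _ ≤ r / (1 + enorm3 e) * (1 + enorm3 e) := by gcongr; linarith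
      _ = r := by field_simp
  · simpa [mul_comm t] using ht i hi k

theorem geodesic_shift_lemma_general
    (F : Finset (Fin 3 → ℤ)) (d : ℝ) (hd : 0 < d) :
    ∃ η : ℝ, 0 < η ∧
      ∀ p q : (Fin 3 → ℤ) → V3,
        (∀ f ∈ F, ∀ g ∈ F, f ≠ g →
          ∀ x ∈ geo f (p f), ∀ y ∈ geo g (p g), 2 * d ≤ enorm3 (x - y)) →
        (∀ f ∈ F, ∀ g ∈ F, f ≠ g →
          ∀ x ∈ geo f (q f), ∀ y ∈ geo g (q g), 2 * d ≤ enorm3 (x - y)) →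
        ∃ z : V3, enorm3 z ≤ d / 4 ∧
          ∀ f ∈ F, ∀ g ∈ F,
            ∀ x ∈ geo f (p f), ∀ y ∈ geo g (q g + z), η ≤ enorm3 (x - y) := by
  choose n hn₀ hnf hng using fun fg : (Fin 3 → ℤ) × (Fin 3 → ℤ) =>
    exists_ne_zero_dotProduct_eq_zero_pair fg.1 fg.2
  have hν : ∀ fg, (Int.cast ∘ n fg : V3) ≠ 0 := fun fg h =>
    hn₀ fg (funext fun i => by simpa using congrFun h i)
  obtain ⟨ε, hε, hshift⟩ := exists_small_shift_far_from_two_pi_int (F ×ˢ F)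
    (fun fg _ => hν fg) (r := d / 4) (by positivity)
  set C := 1 + ∑ fg ∈ F ×ˢ F, enorm3 (Int.cast ∘ n fg)
  have hC₀ : 0 < C := by
    have := Finset.sum_nonneg fun fg (_ : fg ∈ F ×ˢ F) => enorm3_nonneg (Int.cast ∘ n fg)
    linarith
  have hC : ∀ fg ∈ F ×ˢ F, enorm3 (Int.cast ∘ n fg) ≤ C := fun fg hfg =>
    (Finset.single_le_sum (f := fun fg => enorm3 (Int.cast ∘ n fg))
      (fun _ _ => enorm3_nonneg _) hfg).trans (le_add_of_nonneg_left zero_le_one)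
  refine ⟨ε / C, div_pos hε hC₀, fun p q _ _ => ?_⟩
  obtain ⟨z, hz, hfar⟩ := hshift fun fg => (Int.cast ∘ n fg) ⬝ᵥ (p fg.1 - q fg.2)
  refine ⟨z, hz, fun f hf g hg x hx y hy => ?_⟩
  have hfg : (f, g) ∈ F ×ˢ F := Finset.mem_product.2 ⟨hf, hg⟩
  have hdist := le_enorm3_mul_enorm3_sub_of_mem_geo (hnf (f, g)) (hng (f, g)) hx hy
    fun k => by simpa [dotProduct_add, sub_add_eq_sub_sub] using hfar _ hfg k
  have hn := enorm3_pos (hν (f, g))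
  calc ε / C ≤ ε / enorm3 (Int.cast ∘ n (f, g)) := by gcongr; exact hC _ hfg
    _ ≤ enorm3 (x - y) := by rw [div_le_iff₀ hn]; linarith

/-- **Lemma 6.1 of De Lellis–Kwon** (shifting families of closed geodesics apart). For any
finite family `𝓕 ⊂ ℤ³∖{0}` and `d > 0` there is `η > 0` such that: whenever two families
of closed geodesics `{l_{f,p_f}}` and `{l_{f,q_f}}` are each `2d`-separated, there is a
shift `z` with `|z| ≤ d/4` such that every geodesic of the first family is at distance at
least `η` from every `z`-shifted geodesic of the second family. -/
theorem geodesic_shift_lemma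
    (F : Finset (Fin 3 → ℤ)) (h0 : (0 : Fin 3 → ℤ) ∉ F) (d : ℝ) (hd : 0 < d) :
    ∃ η : ℝ, 0 < η ∧
      ∀ p q : (Fin 3 → ℤ) → V3,
        (∀ f ∈ F, ∀ g ∈ F, f ≠ g →
          ∀ x ∈ geo f (p f), ∀ y ∈ geo g (p g), 2 * d ≤ enorm3 (x - y)) →
        (∀ f ∈ F, ∀ g ∈ F, f ≠ g →
          ∀ x ∈ geo f (q f), ∀ y ∈ geo g (q g), 2 * d ≤ enorm3 (x - y)) →
        ∃ z : V3, enorm3 z ≤ d / 4 ∧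
          ∀ f ∈ F, ∀ g ∈ F,
            ∀ x ∈ geo f (p f), ∀ y ∈ geo g (q g + z), η ≤ enorm3 (x - y) :=
  geodesic_shift_lemma_general F d hd
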